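/- For every integer d ≥ 3, the function x ↦ (2d - 2 Σ_{i=1}^d cos(2π x_i))^{-1} is integrable on the unit cube [0,1]^d with respect to Lebesgue measure; in particular the integral R^hydro_d := ∫_{[0,1]^d} (2d - 2 Σ_{i=1}^d cos(2π x_i))^{-1} dx is finite. -/
import Mathlib


open Real MeasureTheory Set Metric Filter
open scoped ENNReal


lemma cube_volume (d : ℕ) : volume (Set.univ.pi fun _ : Fin d => Set.Icc (0:ℝ) 1) = 1 := by
  rw [volume_pi_pi]
  simp [Real.volume_Icc]

lemma aux_integrable (d : ℕ) (hd : 3 ≤ d) (c : Fin d → ℝ) :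
    IntegrableOn (fun x : Fin d → ℝ => (‖x - c‖ ^ 2)⁻¹)
      (Set.univ.pi fun _ : Fin d => Set.Icc (0 : ℝ) 1) volume := by
  set S : Set (Fin d → ℝ) := Set.univ.pi fun _ : Fin d => Set.Icc (0 : ℝ) 1 with hS
  have hSm : MeasurableSet S := MeasurableSet.univ_pi fun _ => measurableSet_Icc
  have hmeas : Measurable fun x : Fin d → ℝ => (‖x - c‖ ^ 2)⁻¹ := by fun_prop
  have hnn : ∀ x : Fin d → ℝ, 0 ≤ (‖x - c‖ ^ 2)⁻¹ := fun x => by positivity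
  refine ⟨(hmeas.aestronglyMeasurable).restrict, ?_⟩
  rw [hasFiniteIntegral_iff_ofReal (Eventually.of_forall hnn)]
  rw [lintegral_eq_lintegral_meas_le _ (Eventually.of_forall hnn)
    (hmeas.aemeasurable.restrict)]
  set μ := volume.restrict S with hμ
  have hfin : ∀ t : ℝ, μ {a | t ≤ (‖a - c‖ ^ 2)⁻¹} ≤ 1 := by
    intro t
    calc μ {a | t ≤ (‖a - c‖ ^ 2)⁻¹} ≤ μ Set.univ := measure_mono (subset_univ _)
    _ = 1 := by rw [hμ, Measure.restrict_apply_univ, cube_volume]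
  have hball : ∀ t ∈ Ioi (1:ℝ), μ {a | t ≤ (‖a - c‖ ^ 2)⁻¹}
      ≤ ENNReal.ofReal (t ^ (-(d:ℝ)/2)) * volume (ball (0 : Fin d → ℝ) 1) := by
    intro t ht
    have ht0 : (0:ℝ) < t := lt_trans one_pos ht
    have hsub : {a : Fin d → ℝ | t ≤ (‖a - c‖ ^ 2)⁻¹} ⊆ closedBall c (Real.sqrt t⁻¹) := by
      intro a ha
      simp only [mem_setOf_eq] at ha
      have h1 : ‖a - c‖ ^ 2 ≤ t⁻¹ := by
        by_cases h : ‖a - c‖ = 0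
        · simp [h]; positivity
        · have h2 : 0 < ‖a - c‖ ^ 2 := by positivity
          have := (le_inv_comm₀ ht0 (by positivity)).mp ha
          linarith [this]
      have : ‖a - c‖ ≤ Real.sqrt t⁻¹ := (Real.le_sqrt (norm_nonneg _) (by positivity)).mpr h1
      rwa [mem_closedBall, dist_eq_norm]
    calc μ {a | t ≤ (‖a - c‖ ^ 2)⁻¹} ≤ μ (closedBall c (Real.sqrt t⁻¹)) := measure_mono hsub
    _ ≤ volume (closedBall c (Real.sqrt t⁻¹)) := Measure.restrict_le_self _
    _ = ENNReal.ofReal (Real.sqrt t⁻¹ ^ Module.finrank ℝ (Fin d → ℝ))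
        * volume (ball (0 : Fin d → ℝ) 1) :=
      Measure.addHaar_closedBall _ _ (Real.sqrt_nonneg _)
    _ = ENNReal.ofReal (t ^ (-(d:ℝ)/2)) * volume (ball (0 : Fin d → ℝ) 1) := by
      congr 2
      rw [Module.finrank_fintype_fun_eq_card, Fintype.card_fin]
      rw [Real.sqrt_eq_rpow, ← Real.rpow_natCast (t⁻¹ ^ (1/2:ℝ)) d,
        ← Real.rpow_mul (by positivity), Real.inv_rpow ht0.le, ← Real.rpow_neg ht0.le]
      ring_nf
  calc (∫⁻ t in Ioi (0:ℝ), μ {a | t ≤ (‖a - c‖ ^ 2)⁻¹})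
      ≤ ∫⁻ t in Ioc (0:ℝ) 1 ∪ Ioi 1, μ {a | t ≤ (‖a - c‖ ^ 2)⁻¹} :=
        lintegral_mono_set Ioi_subset_Ioc_union_Ioi
    _ ≤ (∫⁻ t in Ioc (0:ℝ) 1, μ {a | t ≤ (‖a - c‖ ^ 2)⁻¹})
        + ∫⁻ t in Ioi (1:ℝ), μ {a | t ≤ (‖a - c‖ ^ 2)⁻¹} := lintegral_union_le _ _ _
    _ < ∞ := by
        refine ENNReal.add_lt_top.2 ⟨?_, ?_⟩
        · calc (∫⁻ t in Ioc (0:ℝ) 1, μ {a | t ≤ (‖a - c‖ ^ 2)⁻¹})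
              ≤ ∫⁻ _ in Ioc (0:ℝ) 1, 1 := lintegral_mono fun t => hfin t
          _ = volume (Ioc (0:ℝ) 1) := by simp
          _ < ∞ := by simp [Real.volume_Ioc]
        · calc (∫⁻ t in Ioi (1:ℝ), μ {a | t ≤ (‖a - c‖ ^ 2)⁻¹})
              ≤ ∫⁻ t in Ioi (1:ℝ), ENNReal.ofReal (t ^ (-(d:ℝ)/2))
                  * volume (ball (0 : Fin d → ℝ) 1) :=
            setLIntegral_mono' measurableSet_Ioi hball
          _ = (∫⁻ t in Ioi (1:ℝ), ENNReal.ofReal (t ^ (-(d:ℝ)/2)))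
              * volume (ball (0 : Fin d → ℝ) 1) :=
            lintegral_mul_const' _ _ measure_ball_lt_top.ne
          _ < ∞ := by
            refine ENNReal.mul_lt_top ?_ measure_ball_lt_top
            refine IntegrableOn.setLIntegral_lt_top ?_
            refine integrableOn_Ioi_rpow_of_lt ?_ one_pos
            have : (3:ℝ) ≤ d := by exact_mod_cast hd
            linarith


section
variable (d : ℕ)

lemma sin_lb {y : ℝ} (h0 : 0 ≤ y) (h1 : y ≤ 1/2) : 2 * y ≤ Real.sin (π * y) := by
  have := Real.mul_le_sin (x := π * y) (by positivity)
    (by nlinarith [Real.pi_pos])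
  calc 2 * y = 2 / π * (π * y) := by
        rw [div_mul_eq_mul_div, mul_comm π y, ← mul_assoc]
        field_simp
  _ ≤ Real.sin (π * y) := this

lemma key_bound (d : ℕ) (x : Fin d → ℝ) (hx : ∀ i, x i ∈ Set.Icc (0:ℝ) 1) :
    (2 * d - 2 * ∑ i, Real.cos (2 * π * x i))⁻¹
      ≤ ∑ ε : Fin d → Bool, (‖x - (fun i => if ε i then (1:ℝ) else 0)‖ ^ 2)⁻¹ := by
  classical
  set D := 2 * (d:ℝ) - 2 * ∑ i, Real.cos (2 * π * x i) with hDdef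
  have hD : D = ∑ i : Fin d, (2 - 2 * Real.cos (2 * π * x i)) := by
    rw [hDdef, Finset.sum_sub_distrib, Finset.sum_const, Finset.card_univ, Fintype.card_fin,
      ← Finset.mul_sum, nsmul_eq_mul]
    ring
  have hterm : ∀ i : Fin d, 2 - 2 * Real.cos (2 * π * x i) = 4 * Real.sin (π * x i) ^ 2 := by
    intro i
    have : 2 * π * x i = 2 * (π * x i) := by ring
    rw [this, Real.cos_two_mul]
    nlinarith [Real.sin_sq_add_cos_sq (π * x i)]
  have htermnn : ∀ i : Fin d, 0 ≤ 2 - 2 * Real.cos (2 * π * x i) := fun i => by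
    rw [hterm i]; positivity
  have hDnn : 0 ≤ D := hD ▸ Finset.sum_nonneg fun i _ => htermnn i
  set ε : Fin d → Bool := fun i => decide ((1:ℝ)/2 < x i) with hε
  set c : Fin d → ℝ := fun i => if ε i then 1 else 0 with hc
  have hmi : ∀ i, 2 * |x i - c i| ≤ Real.sin (π * x i) := by
    intro i
    obtain ⟨h0, h1⟩ := hx i
    by_cases h : (1:ℝ)/2 < x i
    · have hci : c i = 1 := by have he : ε i = true := decide_eq_true h; simp [hc, he]
      rw [hci, abs_of_nonpos (by linarith)]
      have : Real.sin (π * x i) = Real.sin (π * (1 - x i)) := by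
        rw [show π * (1 - x i) = π - π * x i by ring, Real.sin_pi_sub]
      rw [this]
      have := sin_lb (y := 1 - x i) (by linarith) (by linarith)
      linarith
    · have hci : c i = 0 := by have he : ε i = false := decide_eq_false h; simp [hc, he]
      rw [hci, sub_zero, abs_of_nonneg h0]
      exact sin_lb h0 (by linarith)
  have hsq : ∀ i, (x i - c i) ^ 2 ≤ D := by
    intro i
    have h2 := hmi i
    have h3 : (x i - c i) ^ 2 ≤ Real.sin (π * x i) ^ 2 := by
      nlinarith [abs_nonneg (x i - c i), sq_abs (x i - c i)]
    calc (x i - c i) ^ 2 ≤ Real.sin (π * x i) ^ 2 := h3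
    _ ≤ 4 * Real.sin (π * x i) ^ 2 := by nlinarith [sq_nonneg (Real.sin (π * x i))]
    _ = 2 - 2 * Real.cos (2 * π * x i) := (hterm i).symm
    _ ≤ D := hD ▸ Finset.single_le_sum (fun j _ => htermnn j) (Finset.mem_univ i)
  have hnorm : ‖x - c‖ ^ 2 ≤ D := by
    have h1 : ‖x - c‖ ≤ Real.sqrt D := by
      refine pi_norm_le_iff_of_nonneg (Real.sqrt_nonneg _) |>.mpr fun i => ?_
      rw [Pi.sub_apply, Real.norm_eq_abs]
      exact Real.abs_le_sqrt (hsq i)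
    calc ‖x - c‖ ^ 2 ≤ Real.sqrt D ^ 2 := by
          nlinarith [norm_nonneg (x - c), Real.sqrt_nonneg D]
    _ = D := Real.sq_sqrt hDnn
  have hmain : D⁻¹ ≤ (‖x - c‖ ^ 2)⁻¹ := by
    by_cases hz : ‖x - c‖ = 0
    · have hxc : x = c := by rwa [norm_eq_zero, sub_eq_zero] at hz
      have hcos : ∀ i, Real.cos (2 * π * x i) = 1 := by
        intro i
        by_cases h : ε i
        · have : x i = 1 := by rw [hxc]; simp [hc, h]
          rw [this, mul_one, Real.cos_two_pi]
        · have : x i = 0 := by rw [hxc]; simp [hc, h]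
          rw [this, mul_zero, Real.cos_zero]
      have hD0 : D = 0 := by
        rw [hDdef, Finset.sum_congr rfl fun i _ => hcos i]
        simp
      rw [hD0]
      simp
    · have hpos : 0 < ‖x - c‖ ^ 2 := by positivity
      exact inv_anti₀ hpos hnorm
  refine hmain.trans ?_
  have : (‖x - c‖ ^ 2)⁻¹ = (‖x - (fun i => if ε i then (1:ℝ) else 0)‖ ^ 2)⁻¹ := rfl
  rw [this]
  exact Finset.single_le_sum (f := fun e : Fin d → Bool =>
    (‖x - (fun i => if e i then (1:ℝ) else 0)‖ ^ 2)⁻¹)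
    (fun e _ => by positivity) (Finset.mem_univ ε)
end


theorem hydro_integrable (d : ℕ) (hd : 3 ≤ d) :
    IntegrableOn (fun x : Fin d → ℝ => (2 * d - 2 * ∑ i, Real.cos (2 * π * x i))⁻¹)
      (Set.univ.pi fun _ : Fin d => Set.Icc (0 : ℝ) 1) volume := by
  classical
  have hSm : MeasurableSet (Set.univ.pi fun _ : Fin d => Set.Icc (0 : ℝ) 1) :=
    MeasurableSet.univ_pi fun _ => measurableSet_Icc
  have hfm : Measurable fun x : Fin d → ℝ =>
      (2 * (d:ℝ) - 2 * ∑ i, Real.cos (2 * π * x i))⁻¹ := by fun_prop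
  have hG : IntegrableOn
      (fun x : Fin d → ℝ => ∑ ε : Fin d → Bool,
        (‖x - (fun i => if ε i then (1:ℝ) else 0)‖ ^ 2)⁻¹)
      (Set.univ.pi fun _ : Fin d => Set.Icc (0 : ℝ) 1) volume :=
    integrable_finset_sum _ fun ε _ => aux_integrable d hd _
  refine Integrable.mono' hG hfm.aestronglyMeasurable.restrict ?_
  filter_upwards [ae_restrict_mem hSm] with x hx
  have hx' : ∀ i, x i ∈ Set.Icc (0:ℝ) 1 := fun i => hx i (Set.mem_univ i)
  have hDnn : 0 ≤ 2 * (d:ℝ) - 2 * ∑ i, Real.cos (2 * π * x i) := by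
    have h1 : ∑ i : Fin d, Real.cos (2 * π * x i) ≤ ∑ _i : Fin d, (1:ℝ) :=
      Finset.sum_le_sum fun i _ => Real.cos_le_one _
    rw [Finset.sum_const, Finset.card_univ, Fintype.card_fin, nsmul_eq_mul, mul_one] at h1
    linarith
  rw [Real.norm_eq_abs, abs_of_nonneg (inv_nonneg.2 hDnn)]
  exact key_bound d x hx'
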